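/- Let (Z_t)_{t ∈ ℤ} be a stationary 𝒵-valued process with β-mixing coefficients β(k), let a, μ' ≥ 1 be integers, let M > 0, let B and p be positive integers, and let ℱ be a finite set of measurable functions from 𝒵 to [0, M] with cardinality at most 2^{Bp}. For each ℓ_f ∈ ℱ set L(f) = E[ℓ_f(Z_1)] and L̂^spaced(f) = (1/μ') Σ_{k=1}^{μ'} ℓ_f(Z_{1+(k−1)a}). Let δ ∈ (0,1) be such that δ'' = δ − (μ' − 1)β(a) > 0, and set A = Bp·ln 2 + ln(1/δ''). Then with probability at least 1 − δ, simultaneously for all ℓ_f ∈ ℱ: L(f) ≤ L̂^spaced(f) + √( 2 M A · L̂^spaced(f) / μ' ) + 4 M A / μ'. -/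

import Mathlib

open MeasureTheory ProbabilityTheory

/-- Total variation distance between two measures. -/
noncomputable def tvDist {α : Type*} [MeasurableSpace α] (μ ν : Measure α) : ℝ :=
  ⨆ A : {A : Set α // MeasurableSet A}, |(μ A).toReal - (ν A).toReal|

/-- β-mixing coefficient of the process `Z` under `P`: the supremum over `t` of the
total variation distance between the joint law of `((Z s)_{s ≤ t}, (Z s)_{s ≥ t+k})`
and the product of the marginal laws. -/
noncomputable def betaMix {Ω 𝒵 : Type*} [MeasurableSpace Ω] [MeasurableSpace 𝒵]
    (P : Measure Ω) (Z : ℤ → Ω → 𝒵) (k : ℕ) : ℝ :=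
  ⨆ t : ℤ, tvDist
    (P.map (fun ω => (fun s : {s : ℤ // s ≤ t} => Z s ω,
                      fun s : {s : ℤ // t + k ≤ s} => Z s ω)))
    ((P.map (fun ω => fun s : {s : ℤ // s ≤ t} => Z s ω)).prod
      (P.map (fun ω => fun s : {s : ℤ // t + k ≤ s} => Z s ω)))

/-- Stationarity of the process `Z` under `P`. -/
def Stationary {Ω 𝒵 : Type*} [MeasurableSpace Ω] [MeasurableSpace 𝒵]
    (P : Measure Ω) (Z : ℤ → Ω → 𝒵) : Prop :=
  ∀ s : ℤ, P.map (fun ω => fun t : ℤ => Z (t + s) ω) = P.map (fun ω => fun t : ℤ => Z t ω)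

/-!
Blocking argument.  Peeling off the first coordinate of the spaced sample
`(Z s, Z (s + a), …)` separates its past from the future after a gap `a`, so replacing
the joint law of the two pieces by the product of their laws costs at most `β(a)` on any
event; by induction the law of `μ'` spaced observations is within `(μ' - 1) β(a)` of the
i.i.d. law `ν^μ'`, with `ν` the (stationary) marginal.

Under `ν^μ'`, a loss `f` with values in `[0, M]` and mean `L` satisfies
`E e^{-s f} ≤ exp ((s² M / 2 - s) L)` because `e^{-x} ≤ 1 - x + x² / 2` for `x ≥ 0`; the
Chernoff bound with the optimal `s` gives the lower tail
`P (∑ f ≤ μ' L - τ) ≤ exp (-τ² / (2 μ' M L))`.  Taking `τ = μ' √(2 c L)` with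
`c = M A / μ'` and solving `L - √(2 c L) ≤ L̂` for `L` yields `L ≤ L̂ + √(2 c L̂) + 2 c`
outside an event of probability `e^{-A}`.  A union bound over the at most `2^{Bp}` losses,
with `A` chosen so that `2^{Bp} e^{-A} = δ''`, leaves a failure probability of at most
`δ'' + (μ' - 1) β(a) = δ`.
-/

open Real

section TotalVariation

variable {α : Type*} [MeasurableSpace α] {μ ν : Measure α}

lemma tvDist_nonneg : 0 ≤ tvDist μ ν :=
  Real.iSup_nonneg fun _ => abs_nonneg _

lemma tvDist_le_one [IsProbabilityMeasure μ] [IsProbabilityMeasure ν] : tvDist μ ν ≤ 1 :=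
  Real.iSup_le (fun _ => abs_sub_le_of_nonneg_of_le measureReal_nonneg measureReal_le_one
    measureReal_nonneg measureReal_le_one) zero_le_one

variable [IsFiniteMeasure μ] [IsFiniteMeasure ν]

lemma abs_measureReal_sub_le (A : Set α) :
    |μ.real A - ν.real A| ≤ μ.real Set.univ + ν.real Set.univ := by
  have hμ : μ.real A ≤ μ.real Set.univ := measureReal_mono (Set.subset_univ A)
  have hν : ν.real A ≤ ν.real Set.univ := measureReal_mono (Set.subset_univ A)
  rw [abs_le]
  constructor <;> linarith [measureReal_nonneg (μ := μ) (s := A),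
    measureReal_nonneg (μ := ν) (s := A)]

lemma measure_le_add_tvDist {A : Set α} (hA : MeasurableSet A) :
    μ A ≤ ν A + ENNReal.ofReal (tvDist μ ν) := by
  have hbdd : BddAbove (Set.range fun B : {B : Set α // MeasurableSet B} =>
      |μ.real B - ν.real B|) :=
    ⟨_, Set.forall_mem_range.2 fun B => abs_measureReal_sub_le B.1⟩
  have h : μ.real A ≤ ν.real A + tvDist μ ν :=
    sub_le_iff_le_add'.1 ((le_abs_self _).trans (le_ciSup hbdd ⟨A, hA⟩))
  rw [← ENNReal.ofReal_toReal (measure_ne_top μ A),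
    ← ENNReal.ofReal_toReal (measure_ne_top ν A)]
  exact (ENNReal.ofReal_le_ofReal h).trans ENNReal.ofReal_add_le

end TotalVariation

lemma MeasureTheory.Measure.prod_apply_le_prod_apply_add {α β : Type*} [MeasurableSpace α]
    [MeasurableSpace β] {ρ : Measure α} [IsProbabilityMeasure ρ] {μ₁ μ₂ : Measure β}
    [SFinite μ₁] [SFinite μ₂] {c : ENNReal} (h : ∀ G, MeasurableSet G → μ₁ G ≤ μ₂ G + c)
    {F : Set (α × β)} (hF : MeasurableSet F) :
    (ρ.prod μ₁) F ≤ (ρ.prod μ₂) F + c := by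
  rw [Measure.prod_apply hF, Measure.prod_apply hF]
  calc ∫⁻ x, μ₁ (Prod.mk x ⁻¹' F) ∂ρ ≤ ∫⁻ x, (μ₂ (Prod.mk x ⁻¹' F) + c) ∂ρ :=
        lintegral_mono fun x => h _ (measurable_prodMk_left hF)
    _ = ∫⁻ x, μ₂ (Prod.mk x ⁻¹' F) ∂ρ + c := by
        rw [lintegral_add_right _ measurable_const, lintegral_const, measure_univ, mul_one]

section Mixing

variable {Ω 𝒵 : Type*} [MeasurableSpace Ω] [MeasurableSpace 𝒵] {P : Measure Ω}
  {Z : ℤ → Ω → 𝒵}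

lemma betaMix_nonneg (k : ℕ) : 0 ≤ betaMix P Z k :=
  Real.iSup_nonneg fun _ => tvDist_nonneg

lemma Stationary.map_eq (hstat : Stationary P Z) (hZ : ∀ t, Measurable (Z t)) (s t : ℤ) :
    P.map (Z s) = P.map (Z t) := by
  have hshift : Measurable fun ω (u : ℤ) => Z (u + (s - t)) ω :=
    measurable_pi_lambda _ fun _ => hZ _
  have hproc : Measurable fun ω (u : ℤ) => Z u ω := measurable_pi_lambda _ fun _ => hZ _
  have h := congrArg (Measure.map fun x : ℤ → 𝒵 => x t) (hstat (s - t))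
  rw [Measure.map_map (measurable_pi_apply t) hshift,
    Measure.map_map (measurable_pi_apply t) hproc] at h
  simpa only [Function.comp_def, add_sub_cancel] using h

variable [IsProbabilityMeasure P]

lemma tvDist_le_betaMix (hZ : ∀ t, Measurable (Z t)) (t : ℤ) (k : ℕ) :
    tvDist
      (P.map fun ω => (fun s : {s : ℤ // s ≤ t} => Z s ω, fun s : {s : ℤ // t + k ≤ s} => Z s ω))
      ((P.map fun ω (s : {s : ℤ // s ≤ t}) => Z s ω).prod
        (P.map fun ω (s : {s : ℤ // t + k ≤ s}) => Z s ω))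
      ≤ betaMix P Z k := by
  have hle_one (u : ℤ) : tvDist
      (P.map fun ω => (fun s : {s : ℤ // s ≤ u} => Z s ω, fun s : {s : ℤ // u + k ≤ s} => Z s ω))
      ((P.map fun ω (s : {s : ℤ // s ≤ u}) => Z s ω).prod
        (P.map fun ω (s : {s : ℤ // u + k ≤ s}) => Z s ω)) ≤ 1 := by
    have hpast : Measurable fun ω (s : {s : ℤ // s ≤ u}) => Z s ω :=
      measurable_pi_lambda _ fun _ => hZ _
    have hfut : Measurable fun ω (s : {s : ℤ // u + k ≤ s}) => Z s ω :=
      measurable_pi_lambda _ fun _ => hZ _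
    have := Measure.isProbabilityMeasure_map (μ := P) hpast.aemeasurable
    have := Measure.isProbabilityMeasure_map (μ := P) hfut.aemeasurable
    have := Measure.isProbabilityMeasure_map (μ := P) (hpast.prodMk hfut).aemeasurable
    exact tvDist_le_one
  exact le_ciSup ⟨1, Set.forall_mem_range.2 hle_one⟩ t

lemma map_pair_apply_le_prod_add_betaMix (hZ : ∀ t, Measurable (Z t)) (t : ℤ) (k : ℕ)
    {α β : Type*} [MeasurableSpace α] [MeasurableSpace β]
    {φ : ({s : ℤ // s ≤ t} → 𝒵) → α} {ψ : ({s : ℤ // t + k ≤ s} → 𝒵) → β}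
    (hφ : Measurable φ) (hψ : Measurable ψ) {F : Set (α × β)} (hF : MeasurableSet F) :
    P.map (fun ω => (φ fun s => Z s ω, ψ fun s => Z s ω)) F
      ≤ ((P.map fun ω => φ fun s => Z s ω).prod (P.map fun ω => ψ fun s => Z s ω)) F
        + ENNReal.ofReal (betaMix P Z k) := by
  have hpast : Measurable fun ω (s : {s : ℤ // s ≤ t}) => Z s ω :=
    measurable_pi_lambda _ fun _ => hZ _
  have hfut : Measurable fun ω (s : {s : ℤ // t + k ≤ s}) => Z s ω :=
    measurable_pi_lambda _ fun _ => hZ _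
  have hmap := hφ.prodMap hψ
  calc P.map (fun ω => (φ fun s => Z s ω, ψ fun s => Z s ω)) F
      = (P.map fun ω => (fun s : {s : ℤ // s ≤ t} => Z s ω, fun s : {s : ℤ // t + k ≤ s} => Z s ω))
          (Prod.map φ ψ ⁻¹' F) := by
        rw [← Measure.map_apply hmap hF, Measure.map_map hmap (hpast.prodMk hfut)]
        rfl
    _ ≤ ((P.map fun ω (s : {s : ℤ // s ≤ t}) => Z s ω).prod
          (P.map fun ω (s : {s : ℤ // t + k ≤ s}) => Z s ω)) (Prod.map φ ψ ⁻¹' F)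
          + ENNReal.ofReal (betaMix P Z k) :=
        (measure_le_add_tvDist (hmap hF)).trans (by gcongr; exact tvDist_le_betaMix hZ t k)
    _ = _ := by
        rw [← Measure.map_apply hmap hF, ← Measure.map_prod_map _ _ hφ hψ,
          Measure.map_map hφ hpast, Measure.map_map hψ hfut]
        rfl

end Mixing

def spacedSample {Ω 𝒵 : Type*} (Z : ℤ → Ω → 𝒵) (s : ℤ) (a m : ℕ) (ω : Ω) : Fin m → 𝒵 :=
  fun k => Z (s + k * a) ω

lemma piFinSuccAbove_spacedSample {Ω 𝒵 : Type*} [MeasurableSpace 𝒵] (Z : ℤ → Ω → 𝒵)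
    (s : ℤ) (a m : ℕ) (ω : Ω) :
    MeasurableEquiv.piFinSuccAbove (fun _ => 𝒵) 0 (spacedSample Z s a (m + 1) ω)
      = (Z s ω, spacedSample Z (s + a) a m ω) := by
  refine Prod.ext (by simp [spacedSample]) (funext fun j => ?_)
  simp only [spacedSample, MeasurableEquiv.piFinSuccAbove_apply, Fin.insertNthEquiv_symm_apply,
    Fin.removeNth, Fin.succAbove_zero, Fin.val_succ]
  push_cast
  ring_nf

section Blocking

variable {Ω 𝒵 : Type*} [MeasurableSpace Ω] [MeasurableSpace 𝒵] {P : Measure Ω}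
  {Z : ℤ → Ω → 𝒵} {ν : Measure 𝒵}

lemma measurable_spacedSample (hZ : ∀ t, Measurable (Z t)) (s : ℤ) (a m : ℕ) :
    Measurable (spacedSample Z s a m) :=
  measurable_pi_lambda _ fun _ => hZ _

lemma map_spacedSample_one (hZ : ∀ t, Measurable (Z t)) (hν : ∀ t, P.map (Z t) = ν)
    (s : ℤ) (a : ℕ) :
    P.map (spacedSample Z s a 1) = Measure.pi fun _ => ν := by
  refine Eq.trans ?_ (measurePreserving_funUnique ν (Fin 1)).symm.map_eq
  rw [← hν s, Measure.map_map (MeasurableEquiv.measurable _) (hZ s)]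
  congr 1
  funext ω k
  simp [spacedSample, Fin.fin_one_eq_zero k]

variable [IsProbabilityMeasure P]

lemma map_spacedSample_succ_apply_le (hZ : ∀ t, Measurable (Z t))
    (hν : ∀ t, P.map (Z t) = ν) (s : ℤ) (a n : ℕ) {E : Set (Fin (n + 1) → 𝒵)}
    (hE : MeasurableSet E) :
    P.map (spacedSample Z s a (n + 1)) E
      ≤ (ν.prod (P.map (spacedSample Z (s + a) a n)))
          ((MeasurableEquiv.piFinSuccAbove (fun _ => 𝒵) 0).symm ⁻¹' E)
        + ENNReal.ofReal (betaMix P Z a) := by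
  set e := MeasurableEquiv.piFinSuccAbove (fun _ : Fin (n + 1) => 𝒵) 0
  have hsplit : spacedSample Z s a (n + 1)
      = e.symm ∘ fun ω => (Z s ω, spacedSample Z (s + a) a n ω) := by
    funext ω
    rw [Function.comp_apply, ← piFinSuccAbove_spacedSample, MeasurableEquiv.symm_apply_apply]
  have hfut (j : Fin n) : s + a ≤ s + a + j * a :=
    le_add_of_nonneg_right (by positivity)
  have hφ : Measurable fun q : {u : ℤ // u ≤ s} → 𝒵 => q ⟨s, le_rfl⟩ := measurable_pi_apply _
  have hψ : Measurable fun (q : {u : ℤ // s + a ≤ u} → 𝒵) (j : Fin n) =>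
      q ⟨s + a + j * a, hfut j⟩ :=
    measurable_pi_lambda _ fun _ => measurable_pi_apply _
  rw [hsplit, ← Measure.map_map e.symm.measurable
    ((hZ s).prodMk (measurable_spacedSample hZ _ _ _)), Measure.map_apply e.symm.measurable hE,
    ← hν s]
  exact map_pair_apply_le_prod_add_betaMix hZ s a hφ hψ (e.symm.measurable hE)

theorem map_spacedSample_apply_le (hZ : ∀ t, Measurable (Z t)) (hν : ∀ t, P.map (Z t) = ν)
    (a : ℕ) {m : ℕ} (hm : 1 ≤ m) (s : ℤ) {E : Set (Fin m → 𝒵)} (hE : MeasurableSet E) :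
    P.map (spacedSample Z s a m) E
      ≤ Measure.pi (fun _ => ν) E + (m - 1 : ℕ) * ENNReal.ofReal (betaMix P Z a) := by
  have : IsProbabilityMeasure ν := hν 0 ▸ Measure.isProbabilityMeasure_map (hZ 0).aemeasurable
  induction m, hm using Nat.le_induction generalizing s with
  | base => simp [map_spacedSample_one hZ hν]
  | succ n hn ih =>
    set e := MeasurableEquiv.piFinSuccAbove (fun _ : Fin (n + 1) => 𝒵) 0
    set β := ENNReal.ofReal (betaMix P Z a)
    calc P.map (spacedSample Z s a (n + 1)) E
        ≤ (ν.prod (P.map (spacedSample Z (s + a) a n))) (e.symm ⁻¹' E) + β :=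
          map_spacedSample_succ_apply_le hZ hν s a n hE
      _ ≤ (ν.prod (Measure.pi fun _ => ν)) (e.symm ⁻¹' E) + (n - 1 : ℕ) * β + β := by
          gcongr
          exact Measure.prod_apply_le_prod_apply_add (fun _ => ih (s + a))
            (e.symm.measurable hE)
      _ = Measure.pi (fun _ => ν) E + (n + 1 - 1 : ℕ) * β := by
          rw [← Measure.map_apply e.symm.measurable hE,
            (measurePreserving_piFinSuccAbove (fun _ => ν) 0).symm.map_eq,
            show n + 1 - 1 = n - 1 + 1 by omega, Nat.cast_succ, add_one_mul, add_assoc]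

lemma measureReal_map_spacedSample_le (hZ : ∀ t, Measurable (Z t))
    (hν : ∀ t, P.map (Z t) = ν) (a : ℕ) {m : ℕ} (hm : 1 ≤ m) (s : ℤ)
    {E : Set (Fin m → 𝒵)} (hE : MeasurableSet E) :
    (P.map (spacedSample Z s a m)).real E
      ≤ (Measure.pi fun _ => ν).real E + (m - 1) * betaMix P Z a := by
  have : IsProbabilityMeasure ν := hν 0 ▸ Measure.isProbabilityMeasure_map (hZ 0).aemeasurable
  have h := ENNReal.toReal_mono (by finiteness) (map_spacedSample_apply_le hZ hν a hm s hE)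
  rwa [ENNReal.toReal_add (by finiteness) (by finiteness), ENNReal.toReal_mul,
    ENNReal.toReal_natCast, ENNReal.toReal_ofReal (betaMix_nonneg a), Nat.cast_sub hm,
    Nat.cast_one] at h

end Blocking

lemma Real.exp_neg_le_one_sub_add_sq_div_two {x : ℝ} (hx : 0 ≤ x) :
    exp (-x) ≤ 1 - x + x ^ 2 / 2 := by
  have hderiv (y : ℝ) :
      HasDerivAt (fun y => 1 - y + y ^ 2 / 2 - exp (-y)) (-1 + y + exp (-y)) y := by
    refine ((((hasDerivAt_id' y).const_sub 1).add ((hasDerivAt_pow 2 y).div_const 2)).sub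
      (hasDerivAt_neg' y).exp).congr_deriv ?_
    push_cast
    ring
  have hmono : Monotone fun y => 1 - y + y ^ 2 / 2 - exp (-y) :=
    monotone_of_hasDerivAt_nonneg hderiv fun y => by
      simp only [Pi.zero_apply]; linarith [add_one_le_exp (-y)]
  simpa using hmono hx

section Chernoff

variable {𝒵 : Type*} [MeasurableSpace 𝒵] {ν : Measure 𝒵} [IsProbabilityMeasure ν]
  {f : 𝒵 → ℝ}

lemma mgf_neg_le_exp_of_mem_Icc (hf : Measurable f) {M : ℝ} (hfM : ∀ z, f z ∈ Set.Icc 0 M)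
    {s : ℝ} (hs : 0 ≤ s) :
    mgf f ν (-s) ≤ exp ((s ^ 2 * M / 2 - s) * ∫ z, f z ∂ν) := by
  set c := s ^ 2 * M / 2 - s with hc
  have hint : Integrable f ν :=
    Integrable.of_bound hf.aestronglyMeasurable M
      (ae_of_all _ fun z => by rw [norm_of_nonneg (hfM z).1]; exact (hfM z).2)
  have hpt (z : 𝒵) : exp (-s * f z) ≤ 1 + c * f z := by
    obtain ⟨h0, hM⟩ := hfM z
    have := exp_neg_le_one_sub_add_sq_div_two (mul_nonneg hs h0)
    rw [neg_mul, hc]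
    nlinarith [mul_le_mul_of_nonneg_left hM (mul_nonneg (sq_nonneg s) h0)]
  calc mgf f ν (-s) ≤ ∫ z, (1 + c * f z) ∂ν :=
        integral_mono_of_nonneg (ae_of_all _ fun _ => (exp_pos _).le)
          ((integrable_const 1).add (hint.const_mul _)) (ae_of_all _ hpt)
    _ = 1 + c * ∫ z, f z ∂ν := by
        rw [integral_add (integrable_const 1) (hint.const_mul _), integral_const_mul]
        simp
    _ ≤ exp (c * ∫ z, f z ∂ν) := by linarith [add_one_le_exp (c * ∫ z, f z ∂ν)]

lemma mgf_sum_pi (hf : Measurable f) (m : ℕ) (t : ℝ) :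
    mgf (fun v : Fin m → 𝒵 => ∑ k, f (v k)) (Measure.pi fun _ => ν) t = mgf f ν t ^ m := by
  have hindep : iIndepFun (fun k (v : Fin m → 𝒵) => f (v k)) (Measure.pi fun _ => ν) :=
    iIndepFun_pi fun _ => hf.aemeasurable
  have hcoord (k : Fin m) :
      mgf (fun v : Fin m → 𝒵 => f (v k)) (Measure.pi fun _ => ν) t = mgf f ν t := by
    conv_rhs => rw [mgf, ← (measurePreserving_eval (fun _ => ν) k).map_eq]
    rw [mgf, integral_map (measurable_pi_apply k).aemeasurable (by fun_prop)]
  rw [← Finset.sum_fn, hindep.mgf_sum (fun k => hf.comp (measurable_pi_apply k))]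
  simp [hcoord]

theorem measureReal_pi_sum_le_sub_le (hf : Measurable f) {M : ℝ} (hM : 0 < M)
    (hfM : ∀ z, f z ∈ Set.Icc 0 M) (m : ℕ) {τ : ℝ} (hτ : 0 ≤ τ) :
    (Measure.pi fun _ : Fin m => ν).real {v | ∑ k, f (v k) ≤ m * ∫ z, f z ∂ν - τ}
      ≤ exp (-(τ ^ 2 / (2 * m * M * ∫ z, f z ∂ν))) := by
  set L := ∫ z, f z ∂ν
  set Q := Measure.pi fun _ : Fin m => ν
  have hL : 0 ≤ L := integral_nonneg fun z => (hfM z).1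
  rcases (mul_nonneg (Nat.cast_nonneg m) hL).eq_or_lt with hmL | hmL
  · -- the exponent is `-(τ ^ 2 / 0) = 0`
    have : 2 * m * M * L = 0 := by linear_combination 2 * M * hmL.symm
    simp [this]
  -- the minimiser of `s ↦ -s τ + m s² M L / 2`
  set s := τ / (m * M * L) with hs_def
  have hs : 0 ≤ s := by positivity
  have hsum : Measurable fun v : Fin m → 𝒵 => ∑ k, f (v k) :=
    Finset.measurable_sum _ fun k _ => hf.comp (measurable_pi_apply k)
  have hint : Integrable (fun v => exp (-s * ∑ k, f (v k))) Q := by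
    refine Integrable.of_bound (hsum.const_mul _).exp.aestronglyMeasurable 1
      (ae_of_all _ fun v => ?_)
    rw [norm_of_nonneg (exp_pos _).le, exp_le_one_iff, neg_mul, neg_nonpos]
    exact mul_nonneg hs (Finset.sum_nonneg fun k _ => (hfM _).1)
  calc _ ≤ exp (-(-s) * (m * L - τ)) * mgf (fun v => ∑ k, f (v k)) Q (-s) :=
        measure_le_le_exp_mul_mgf _ (neg_nonpos.2 hs) hint
    _ ≤ exp (s * (m * L - τ)) * exp ((s ^ 2 * M / 2 - s) * L) ^ m := by
        rw [mgf_sum_pi hf, neg_neg]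
        gcongr
        · exact mgf_nonneg
        · exact mgf_neg_le_exp_of_mem_Icc hf hfM hs
    _ = exp (-(τ ^ 2 / (2 * m * M * L))) := by
        rw [← exp_nat_mul, ← exp_add, hs_def]
        congr 1
        field_simp
        ring

end Chernoff

lemma le_add_sqrt_add_of_sub_sqrt_le {L x c : ℝ} (hL : 0 ≤ L) (hx : 0 ≤ x) (hc : 0 ≤ c)
    (h : L - √(2 * c * L) ≤ x) : L ≤ x + √(2 * c * x) + 2 * c := by
  obtain ⟨u, hu, rfl⟩ : ∃ u, 0 ≤ u ∧ L = u ^ 2 := ⟨√L, sqrt_nonneg L, (sq_sqrt hL).symm⟩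
  obtain ⟨b, hb, hbc⟩ : ∃ b, 0 ≤ b ∧ 2 * c = b ^ 2 :=
    ⟨√(2 * c), sqrt_nonneg _, (sq_sqrt (by positivity)).symm⟩
  rw [hbc, ← mul_pow, sqrt_sq (mul_nonneg hb hu)] at h
  rw [hbc, sqrt_mul (sq_nonneg b), sqrt_sq hb]
  have hsx := sq_sqrt hx
  have hux : u ≤ √x + b := by
    by_contra! hlt
    nlinarith [mul_lt_mul'' (show √x < u by linarith) (show √x < u - b by linarith)
      (sqrt_nonneg x) (sqrt_nonneg x)]
  nlinarith

noncomputable def empiricalRisk {𝒵 : Type*} {m : ℕ} (f : 𝒵 → ℝ) (v : Fin m → 𝒵) : ℝ :=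
  (1 / m) * ∑ k, f (v k)

def fastRateViolation {𝒵 : Type*} [MeasurableSpace 𝒵] (ν : Measure 𝒵) (M A : ℝ) (m : ℕ)
    (f : 𝒵 → ℝ) : Set (Fin m → 𝒵) :=
  {v | empiricalRisk f v + √(2 * M * A * empiricalRisk f v / m) + 4 * M * A / m
    < ∫ z, f z ∂ν}

section FastRate

variable {𝒵 : Type*} [MeasurableSpace 𝒵] {ν : Measure 𝒵} {f : 𝒵 → ℝ} {M A : ℝ} {m : ℕ}

lemma measurableSet_fastRateViolation (hf : Measurable f) :
    MeasurableSet (fastRateViolation ν M A m f) :=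
  measurableSet_lt (by unfold empiricalRisk; fun_prop) measurable_const

variable [IsProbabilityMeasure ν]

theorem measureReal_pi_fastRateViolation_le (hf : Measurable f) (hM : 0 < M)
    (hfM : ∀ z, f z ∈ Set.Icc 0 M) (hm : 0 < m) (hA : 0 ≤ A) :
    (Measure.pi fun _ => ν).real (fastRateViolation ν M A m f) ≤ exp (-A) := by
  set L := ∫ z, f z ∂ν
  have hmR : (0 : ℝ) < m := Nat.cast_pos.2 hm
  have hrisk (v : Fin m → 𝒵) : 0 ≤ empiricalRisk f v :=
    mul_nonneg (by positivity) (Finset.sum_nonneg fun k _ => (hfM _).1)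
  rcases (integral_nonneg fun z => (hfM z).1 : 0 ≤ L).eq_or_lt with hL | hL
  · have hempty : fastRateViolation ν M A m f = ∅ :=
      Set.eq_empty_of_forall_notMem fun v hv => hv.not_ge <| hL.symm.trans_le <|
        add_nonneg (add_nonneg (hrisk v) (sqrt_nonneg _)) (by positivity)
    rw [hempty, measureReal_empty]
    positivity
  set c := M * A / m with hc_def
  have hc : 0 ≤ c := by positivity
  have hτ : (m * √(2 * c * L)) ^ 2 / (2 * m * M * L) = A := by
    rw [mul_pow, sq_sqrt (by positivity), hc_def]
    field_simp
    exact mul_div_cancel_right₀ A hL.ne'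
  calc _ ≤ (Measure.pi fun _ => ν).real
          {v : Fin m → 𝒵 | ∑ k, f (v k) ≤ m * L - m * √(2 * c * L)} := by
        refine measureReal_mono fun v (hv : _ < L) => ?_
        have hlt : empiricalRisk f v < L - √(2 * c * L) := by
          by_contra! hle
          have hbound := le_add_sqrt_add_of_sub_sqrt_le hL.le (hrisk v) hc hle
          rw [show 2 * c * empiricalRisk f v = 2 * M * A * empiricalRisk f v / m by
            rw [hc_def]; ring] at hbound
          linarith [show 4 * M * A / m = 4 * c by rw [hc_def]; ring]
        have hsum : ∑ k, f (v k) = m * empiricalRisk f v := by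
          rw [empiricalRisk]; field_simp
        show ∑ k, f (v k) ≤ _
        nlinarith
    _ ≤ exp (-A) := by
        rw [← hτ]
        exact measureReal_pi_sum_le_sub_le hf hM hfM m (by positivity)

theorem measureReal_pi_biUnion_fastRateViolation_le {ℱ : Finset (𝒵 → ℝ)}
    (hℱ : ∀ f ∈ ℱ, Measurable f) (hM : 0 < M) (hℱM : ∀ f ∈ ℱ, ∀ z, f z ∈ Set.Icc 0 M)
    (hm : 0 < m) (hA : 0 ≤ A) :
    (Measure.pi fun _ => ν).real (⋃ f ∈ ℱ, fastRateViolation ν M A m f)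
      ≤ ℱ.card * exp (-A) := by
  calc _ ≤ ∑ f ∈ ℱ, (Measure.pi fun _ => ν).real (fastRateViolation ν M A m f) :=
        measureReal_biUnion_finset_le _ _
    _ ≤ ∑ f ∈ ℱ, exp (-A) :=
        Finset.sum_le_sum fun f hf =>
          measureReal_pi_fastRateViolation_le (hℱ f hf) hM (hℱM f hf) hm hA
    _ = ℱ.card * exp (-A) := by rw [Finset.sum_const, nsmul_eq_mul]

end FastRate

lemma setOf_forall_integral_le_eq_compl {Ω 𝒵 : Type*} [MeasurableSpace Ω]
    [MeasurableSpace 𝒵] {P : Measure Ω} {Z : ℤ → Ω → 𝒵} (hZ : Measurable (Z 1))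
    {ℱ : Finset (𝒵 → ℝ)} (hℱ : ∀ f ∈ ℱ, Measurable f) (M A : ℝ) (a m : ℕ) :
    {ω | ∀ f ∈ ℱ, ∫ ω', f (Z 1 ω') ∂P
        ≤ (1 / m) * ∑ k : Fin m, f (Z ((1 + (k : ℕ) * a : ℕ) : ℤ) ω)
          + √(2 * M * A * ((1 / m) * ∑ k : Fin m, f (Z ((1 + (k : ℕ) * a : ℕ) : ℤ) ω)) / m)
          + 4 * M * A / m}
      = (spacedSample Z 1 a m ⁻¹' ⋃ f ∈ ℱ, fastRateViolation (P.map (Z 1)) M A m f)ᶜ := by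
  have hsample (ω : Ω) (k : Fin m) :
      spacedSample Z 1 a m ω k = Z ((1 + (k : ℕ) * a : ℕ) : ℤ) ω := by
    simp [spacedSample]
  ext ω
  simp only [fastRateViolation, empiricalRisk, Set.mem_ofPred_eq, Set.mem_compl_iff,
    Set.mem_preimage, Set.mem_iUnion, not_exists, not_lt, hsample]
  refine forall₂_congr fun f hf => ?_
  rw [integral_map hZ.aemeasurable (hℱ f hf).aestronglyMeasurable]

lemma pow_mul_exp_neg_eq {b d A : ℝ} (n : ℕ) (hb : 0 < b) (hd : 0 < d)
    (hA : A = n * log b + log (1 / d)) : b ^ n * exp (-A) = d := by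
  rw [hA, neg_add, exp_add, exp_neg, exp_neg, exp_nat_mul, exp_log hb, exp_log (by positivity)]
  field_simp

theorem fast_rate_bound_quantized_dynamical_general
    {Ω 𝒵 : Type*} [MeasurableSpace Ω] [MeasurableSpace 𝒵]
    (P : Measure Ω) [IsProbabilityMeasure P]
    (Z : ℤ → Ω → 𝒵) (hZmeas : ∀ t, Measurable (Z t))
    (hstat : Stationary P Z)
    (a μ' : ℕ) (hμ' : 1 ≤ μ')
    (M : ℝ) (hM : 0 < M)
    (B p : ℕ)
    (ℱ : Finset (𝒵 → ℝ))
    (hFmeas : ∀ f ∈ ℱ, Measurable f)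
    (hFbdd : ∀ f ∈ ℱ, ∀ z, f z ∈ Set.Icc (0 : ℝ) M)
    (hcard : ℱ.card ≤ 2 ^ (B * p))
    (δ : ℝ) (hδ : δ ∈ Set.Ioo (0 : ℝ) 1)
    (hδ'' : 0 < δ - ((μ' : ℝ) - 1) * betaMix P Z a)
    (A : ℝ)
    (hA : A = B * p * Real.log 2 + Real.log (1 / (δ - ((μ' : ℝ) - 1) * betaMix P Z a))) :
    1 - δ ≤ (P {ω | ∀ f ∈ ℱ,
        ∫ ω', f (Z 1 ω') ∂P
          ≤ (1 / μ') * ∑ k : Fin μ', f (Z ((1 + (k : ℕ) * a : ℕ) : ℤ) ω)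
            + Real.sqrt (2 * M * A
                * ((1 / μ') * ∑ k : Fin μ', f (Z ((1 + (k : ℕ) * a : ℕ) : ℤ) ω)) / μ')
            + 4 * M * A / μ'}).toReal := by
  have hβ := betaMix_nonneg (P := P) (Z := Z) a
  have hμ'R : (1 : ℝ) ≤ μ' := Nat.one_le_cast.2 hμ'
  have hA0 : 0 ≤ A := by
    have : 0 ≤ log (1 / (δ - ((μ' : ℝ) - 1) * betaMix P Z a)) :=
      log_nonneg ((one_le_div hδ'').2 (by nlinarith [hδ.2]))
    rw [hA]
    positivity
  have hν (t : ℤ) : P.map (Z t) = P.map (Z 1) := hstat.map_eq hZmeas t 1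
  have := Measure.isProbabilityMeasure_map (μ := P) (hZmeas 1).aemeasurable
  have hU := Finset.measurableSet_biUnion ℱ fun f hf =>
    measurableSet_fastRateViolation (ν := P.map (Z 1)) (M := M) (A := A) (m := μ') (hFmeas f hf)
  have hS := measurable_spacedSample hZmeas 1 a μ'
  have hcount : (ℱ.card : ℝ) * exp (-A) ≤ δ - ((μ' : ℝ) - 1) * betaMix P Z a := by
    rw [← pow_mul_exp_neg_eq (A := A) (B * p) two_pos hδ'' (by rw [hA]; push_cast; ring)]
    gcongr
    exact_mod_cast hcard
  rw [setOf_forall_integral_le_eq_compl (hZmeas 1) hFmeas, ← measureReal_def,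
    probReal_compl_eq_one_sub (hS hU), ← map_measureReal_apply hS hU]
  linarith [measureReal_map_spacedSample_le hZmeas hν a hμ' 1 hU,
    measureReal_pi_biUnion_fastRateViolation_le hFmeas hM hFbdd hμ' hA0 (ν := P.map (Z 1))]

/-- Fast-rate uniform error bound for quantized dynamical models (Theorem 3 in the
paper): with probability at least `1 - δ`, simultaneously for all `f ∈ ℱ`, the risk
`L f = E[f (Z 1)]` is bounded by `L̂ f + √(2MA·L̂ f/μ') + 4MA/μ'`, where `L̂ f` is the
empirical risk on the spaced sample `(Z 1, Z (1+a), …, Z (1+(μ'-1)a))`,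
`A = Bp ln 2 + ln(1/δ'')` and `δ'' = δ - (μ'-1)β(a) > 0`. -/
theorem fast_rate_bound_quantized_dynamical
    {Ω 𝒵 : Type*} [MeasurableSpace Ω] [MeasurableSpace 𝒵]
    (P : Measure Ω) [IsProbabilityMeasure P]
    (Z : ℤ → Ω → 𝒵) (hZmeas : ∀ t, Measurable (Z t))
    (hstat : Stationary P Z)
    (a μ' : ℕ) (ha : 1 ≤ a) (hμ' : 1 ≤ μ')
    (M : ℝ) (hM : 0 < M)
    (B p : ℕ) (hB : 0 < B) (hp : 0 < p)
    (ℱ : Finset (𝒵 → ℝ))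
    (hFmeas : ∀ f ∈ ℱ, Measurable f)
    (hFbdd : ∀ f ∈ ℱ, ∀ z, f z ∈ Set.Icc (0 : ℝ) M)
    (hcard : ℱ.card ≤ 2 ^ (B * p))
    (δ : ℝ) (hδ : δ ∈ Set.Ioo (0 : ℝ) 1)
    (hδ'' : 0 < δ - ((μ' : ℝ) - 1) * betaMix P Z a)
    (A : ℝ)
    (hA : A = B * p * Real.log 2 + Real.log (1 / (δ - ((μ' : ℝ) - 1) * betaMix P Z a))) :
    1 - δ ≤ (P {ω | ∀ f ∈ ℱ,
        ∫ ω', f (Z 1 ω') ∂P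
          ≤ (1 / μ') * ∑ k : Fin μ', f (Z ((1 + (k : ℕ) * a : ℕ) : ℤ) ω)
            + Real.sqrt (2 * M * A
                * ((1 / μ') * ∑ k : Fin μ', f (Z ((1 + (k : ℕ) * a : ℕ) : ℤ) ω)) / μ')
            + 4 * M * A / μ'}).toReal :=
  fast_rate_bound_quantized_dynamical_general P Z hZmeas hstat a μ' hμ' M hM B p ℱ hFmeas hFbdd
    hcard δ hδ hδ'' A hA
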